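/- Let W be a complete positive ordered abelian semigroup containing a full sequence, and let p denote its largest element. Suppose W satisfies property (Q): for every u ∈ W and every positive integer m, if m·u = p then u = p. Then W satisfies the Corona Factorization Property for semigroups. -/

import Mathlib

namespace Stmt5

variable {W : Type*} [AddCommSemigroup W] [PartialOrder W]

/-- `rep n x` is the `(n+1)`-fold sum `x + x + ⋯ + x`, so that `rep n x = (n+1)·x`. -/
def rep : ℕ → W → W
  | 0, x => x
  | n + 1, x => rep n x + x

/-- `sumTo y n = y 0 + y 1 + ⋯ + y n`. -/
def sumTo (y : ℕ → W) : ℕ → W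
  | 0 => y 0
  | n + 1 => sumTo y n + y (n + 1)

/-- `x ∝ y` : `x ≤ n·y` for some positive integer `n` (encoded as `n + 1`, `n : ℕ`). -/
def Propto (x y : W) : Prop := ∃ n : ℕ, x ≤ rep n y

/-- `x <_s y` : `(k+1)·x ≤ k·y` for some positive integer `k`. -/
def StDom (x y : W) : Prop := ∃ k : ℕ, rep (k + 1) x ≤ rep k y

/-- `x ≪ y` : for every increasing sequence whose supremum exists and dominates `y`,
some term of the sequence dominates `x`. -/
def CC (x y : W) : Prop :=
  ∀ f : ℕ → W, Monotone f → ∀ s : W, IsLUB (Set.range f) s → y ≤ s → ∃ n, x ≤ f n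

/-- `W` is complete: every increasing sequence has a supremum, and `x ≤ y` holds as soon
as `x' ≤ y` for every `x' ≪ x`. -/
def Complete (W : Type*) [AddCommSemigroup W] [PartialOrder W] : Prop :=
  (∀ f : ℕ → W, Monotone f → ∃ s : W, IsLUB (Set.range f) s) ∧
    ∀ x y : W, (∀ x' : W, CC x' x → x' ≤ y) → x ≤ y

/-- A full sequence: increasing, and for all `y' ≪ y` one has `y' ∝ x n` for some `n`. -/
def FullSeq (x : ℕ → W) : Prop :=
  Monotone x ∧ ∀ y' y : W, CC y' y → ∃ n, Propto y' (x n)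

/-- A full element: `y' ∝ x` for all `y' ≪ y`. -/
def FullElem (x : W) : Prop := ∀ y' y : W, CC y' y → Propto y' x

/-- The Corona Factorization Property for semigroups: for every full sequence `(x_n)`,
every sequence `(y_n)`, every `x' ≪ x_0` and every positive integer `m` (encoded `m+1`)
with `x_n ≤ m·y_n` for all `n`, one has `x' ≤ y_0 + ⋯ + y_k` for some `k`. -/
def CFP (W : Type*) [AddCommSemigroup W] [PartialOrder W] : Prop :=
  ∀ x : ℕ → W, FullSeq x → ∀ y : ℕ → W, ∀ x' : W, ∀ m : ℕ,
    CC x' (x 0) → (∀ n, x n ≤ rep m (y n)) → ∃ k, x' ≤ sumTo y k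

/-!
Let `s` be the supremum of the partial sums of `y`. Since `x n ≤ (m+1)·y n`, every partial sum
of the full sequence `x` lies below `(m+1)·s`; fullness and completeness then force
`(m+1)·s` to be the largest element `p`, so `s = p` by (Q). Hence `x 0 ≤ s`, and `x' ≪ x 0`
places `x'` below some partial sum of `y`.
-/

omit [PartialOrder W] in
theorem rep_add (m : ℕ) (a b : W) : rep m (a + b) = rep m a + rep m b := by
  induction m with
  | zero => rfl
  | succ k ih =>
    show rep k (a + b) + (a + b) = rep k a + a + (rep k b + b)
    rw [ih, add_add_add_comm]

omit [PartialOrder W] in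
theorem rep_sumTo (m : ℕ) (y : ℕ → W) (k : ℕ) :
    rep m (sumTo y k) = sumTo (fun i => rep m (y i)) k := by
  induction k with
  | zero => rfl
  | succ n ih =>
    show rep m (sumTo y n + y (n + 1)) = sumTo (fun i => rep m (y i)) n + rep m (y (n + 1))
    rw [rep_add, ih]

theorem sumTo_monotone (hpos : ∀ x z : W, x ≤ x + z) (y : ℕ → W) : Monotone (sumTo y) :=
  monotone_nat_of_le_succ fun k => hpos (sumTo y k) (y (k + 1))

theorem self_le_sumTo (hpos : ∀ x z : W, x ≤ x + z) (x : ℕ → W) (n : ℕ) : x n ≤ sumTo x n := by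
  cases n with
  | zero => exact le_rfl
  | succ k =>
    show x (k + 1) ≤ sumTo x k + x (k + 1)
    rw [add_comm (sumTo x k)]
    exact hpos _ _

section Covariant

variable [AddLeftMono W]

theorem rep_mono (n : ℕ) : Monotone (rep n : W → W) := by
  intro a b h
  induction n with
  | zero => exact h
  | succ k ih => exact add_le_add ih h

theorem sumTo_le_sumTo {y z : ℕ → W} (h : y ≤ z) (k : ℕ) : sumTo y k ≤ sumTo z k := by
  induction k with
  | zero => exact h 0
  | succ n ih => exact add_le_add ih (h (n + 1))

theorem rep_le_sumTo (hpos : ∀ x z : W, x ≤ x + z) {x : ℕ → W} (hx : Monotone x) (n l : ℕ) :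
    rep l (x n) ≤ sumTo x (n + l) := by
  induction l with
  | zero => exact self_le_sumTo hpos x n
  | succ k ih => exact add_le_add ih (hx (Nat.le_add_right n (k + 1)))

theorem FullSeq.le_of_forall_sumTo_le (hpos : ∀ x z : W, x ≤ x + z) (hcomplete : Complete W)
    {x : ℕ → W} (hx : FullSeq x) {t : W} (ht : ∀ k, sumTo x k ≤ t) (z : W) : z ≤ t := by
  refine hcomplete.2 z t fun z' hz' => ?_
  obtain ⟨n, l, hl⟩ := hx.2 z' z hz'
  exact hl.trans ((rep_le_sumTo hpos hx.1 n l).trans (ht (n + l)))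

end Covariant

theorem cfp_of_propertyQ_general
    (hadd : ∀ x y z : W, x ≤ y → x + z ≤ y + z)
    (hpos : ∀ x z : W, x ≤ x + z)
    (hcomplete : Complete W)
    (p : W) (hp : ∀ w : W, w ≤ p)
    (hQ : ∀ (u : W) (m : ℕ), rep m u = p → u = p) :
    CFP W := by
  have : AddLeftMono W := ⟨fun z x y h => by simpa only [add_comm z] using hadd x y z h⟩
  intro x hx y x' m hx' hxy
  obtain ⟨s, hs⟩ := hcomplete.1 (sumTo y) (sumTo_monotone hpos y)
  have hsum : ∀ k, sumTo x k ≤ rep m s := fun k =>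
    calc sumTo x k ≤ sumTo (fun i => rep m (y i)) k := sumTo_le_sumTo hxy k
      _ = rep m (sumTo y k) := (rep_sumTo m y k).symm
      _ ≤ rep m s := rep_mono m (hs.1 (Set.mem_range_self k))
  have hs_top : s = p :=
    hQ s m (le_antisymm (hp _) (hx.le_of_forall_sumTo_le hpos hcomplete hsum p))
  exact hx' (sumTo y) (sumTo_monotone hpos y) s hs (hs_top ▸ hp (x 0))

/-- Property (Q) implies the Corona Factorization Property: if `W` is a complete positive
ordered abelian semigroup containing a full sequence, with largest element `p`, and if
`m·u = p` (for a positive integer `m`) implies `u = p`, then `W` satisfies the Corona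
Factorization Property for semigroups. -/
theorem cfp_of_propertyQ
    (hadd : ∀ x y z : W, x ≤ y → x + z ≤ y + z)
    (hpos : ∀ x z : W, x ≤ x + z)
    (hcomplete : Complete W)
    (hfull : ∃ x : ℕ → W, FullSeq x)
    (p : W) (hp : ∀ w : W, w ≤ p)
    (hQ : ∀ (u : W) (m : ℕ), rep m u = p → u = p) :
    CFP W :=
  cfp_of_propertyQ_general hadd hpos hcomplete p hp hQ

end Stmt5
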